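/- arXiv:1403.7255 — 2 statements merged into one kernel-verified Lean document; each statement's English description precedes it below -/
import Mathlib

section
/- For all real x > 0, u > 0, and every integer r with r ≥ max(1, u), one has (1 + x)^(2r) ≤ (2r/u)^r · exp(u·x²). -/
/-!
Write `s = r / u ≥ 1`. Since `(1 + x)² ≤ 2 (1 + x²)` and `1 + y ≤ s + y ≤ s e^{y/s}`, we get
`(1 + x)² ≤ 2 s e^{x²/s}`; raising this to the power `r` gives `(2r/u)^r e^{u x²}`.
-/

open Real

lemma one_add_le_mul_exp_div {s : ℝ} (hs : 1 ≤ s) (y : ℝ) : 1 + y ≤ s * exp (y / s) := by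
  have hs0 : s ≠ 0 := by positivity
  calc 1 + y ≤ s * (y / s + 1) := by rw [mul_add, mul_div_cancel₀ y hs0]; linarith
    _ ≤ s * exp (y / s) := by gcongr; exact add_one_le_exp _

lemma one_add_sq_le_mul_exp_sq_div {s : ℝ} (hs : 1 ≤ s) (x : ℝ) :
    (1 + x) ^ 2 ≤ 2 * s * exp (x ^ 2 / s) :=
  calc (1 + x) ^ 2 ≤ 2 * (1 ^ 2 + x ^ 2) := add_sq_le
    _ ≤ 2 * s * exp (x ^ 2 / s) := by
      rw [one_pow, mul_assoc]; gcongr; exact one_add_le_mul_exp_div hs _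

theorem stmt0_general (x u : ℝ) (hu : 0 < u) (r : ℕ)
    (hru : u ≤ (r : ℝ)) :
    (1 + x) ^ (2 * r) ≤ (2 * (r : ℝ) / u) ^ r * Real.exp (u * x ^ 2) := by
  have hr : (r : ℝ) ≠ 0 := (hu.trans_le hru).ne'
  have hs : 1 ≤ (r : ℝ) / u := (one_le_div hu).mpr hru
  calc (1 + x) ^ (2 * r) = ((1 + x) ^ 2) ^ r := pow_mul _ _ _
    _ ≤ (2 * (r / u) * exp (x ^ 2 / (r / u))) ^ r :=
      pow_le_pow_left₀ (sq_nonneg _) (one_add_sq_le_mul_exp_sq_div hs x) r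
    _ = (2 * (r : ℝ) / u) ^ r * exp (u * x ^ 2) := by
      rw [mul_pow, ← exp_nat_mul, mul_div_assoc]
      congr 2
      field_simp

theorem stmt0 (x u : ℝ) (hx : 0 < x) (hu : 0 < u) (r : ℕ)
    (hr1 : 1 ≤ r) (hru : u ≤ (r : ℝ)) :
    (1 + x) ^ (2 * r) ≤ (2 * (r : ℝ) / u) ^ r * Real.exp (u * x ^ 2) :=
  stmt0_general x u hu r hru
end

section
/- For all real x > 0, u > 0, and every integer r ≥ max(1, u), one has 1 + u^r · (1 + x)^(2r) ≤ exp(2·r·u·(1 + x²)). -/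
/-!
Since `(1 + x)² ≤ 2 (1 + x²)`, the left side is at most `1 + sʳ` with `s = 2u(1 + x²)`, and
`1 + sʳ ≤ (1 + s)ʳ ≤ (eˢ)ʳ = e^{rs}`.
-/

lemma one_add_pow_le_exp_mul {s : ℝ} (hs : 0 ≤ s) {n : ℕ} (hn : n ≠ 0) :
    1 + s ^ n ≤ Real.exp (n * s) :=
  calc 1 + s ^ n = 1 ^ n + s ^ n := by rw [one_pow]
    _ ≤ (1 + s) ^ n := pow_add_pow_le zero_le_one hs hn
    _ ≤ Real.exp s ^ n := by gcongr; linarith [Real.add_one_le_exp s]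
    _ = Real.exp (n * s) := (Real.exp_nat_mul s n).symm

theorem stmt1_general (x u : ℝ) (hu : 0 < u) (r : ℕ)
    (hr1 : 1 ≤ r) :
    1 + u ^ r * (1 + x) ^ (2 * r) ≤ Real.exp (2 * (r : ℝ) * u * (1 + x ^ 2)) := by
  have hsq : u * (1 + x) ^ 2 ≤ 2 * u * (1 + x ^ 2) :=
    calc u * (1 + x) ^ 2 ≤ u * (2 * (1 ^ 2 + x ^ 2)) := by gcongr; exact add_sq_le
      _ = 2 * u * (1 + x ^ 2) := by ring
  calc 1 + u ^ r * (1 + x) ^ (2 * r) = 1 + (u * (1 + x) ^ 2) ^ r := by rw [mul_pow, pow_mul]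
    _ ≤ 1 + (2 * u * (1 + x ^ 2)) ^ r := by gcongr
    _ ≤ Real.exp (r * (2 * u * (1 + x ^ 2))) :=
      one_add_pow_le_exp_mul (by positivity) (by omega)
    _ = Real.exp (2 * (r : ℝ) * u * (1 + x ^ 2)) := by ring_nf

theorem stmt1 (x u : ℝ) (hx : 0 < x) (hu : 0 < u) (r : ℕ)
    (hr1 : 1 ≤ r) (hru : u ≤ (r : ℝ)) :
    1 + u ^ r * (1 + x) ^ (2 * r) ≤ Real.exp (2 * (r : ℝ) * u * (1 + x ^ 2)) :=
  stmt1_general x u hu r hr1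
end
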